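/- Under assumptions (A1)–(A4), for all x < y in I, the double integral ∬_{T'_{x,y} × T''_{x,y}} Λ(t',x,y)Λ(t'',x,y)·Ω(M(t',x,y), M(t'',x,y)) dμ(t'') dμ(t') equals S₀'(x,y)S₁''(x,y) − S₁'(x,y)S₀''(x,y), and this quantity is strictly positive. -/

import Mathlib

open MeasureTheory

/-!
The inner integral factors, which gives the identity. For positivity put
`g t = Λ t · Ω(M₀, M t)`: by the reproducing property `∫ g = 0`, while `g < 0` on `T'`, `g ≥ 0`
on `T''` and `g ≠ 0` on a set of positive measure. Hence both `T'` and `{Λ > 0, M > M₀}` have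
positive measure, so `S₀' > 0`, `∫_{T''} g > 0` and `∫_{T'} g ≤ 0`, and the identity
`ω₀(M₀) (S₀'S₁'' − S₁'S₀'') = S₀' ∫_{T''} g − S₀'' ∫_{T'} g` shows the quantity is positive.
-/

section General

variable {α β : Type*} [MeasurableSpace α] [MeasurableSpace β] {μ : Measure α}

theorem integral_integral_mul_sub_mul {ν : Measure β} {f₀ f₁ : α → ℝ} {g₀ g₁ : β → ℝ}
    (hf₀ : Integrable f₀ μ) (hf₁ : Integrable f₁ μ) (hg₀ : Integrable g₀ ν)
    (hg₁ : Integrable g₁ ν) :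
    ∫ x, ∫ y, (f₀ x * g₁ y - f₁ x * g₀ y) ∂ν ∂μ =
      (∫ x, f₀ x ∂μ) * (∫ y, g₁ y ∂ν) - (∫ x, f₁ x ∂μ) * (∫ y, g₀ y ∂ν) := by
  have hinner : ∀ x, ∫ y, (f₀ x * g₁ y - f₁ x * g₀ y) ∂ν =
      f₀ x * ∫ y, g₁ y ∂ν - f₁ x * ∫ y, g₀ y ∂ν := fun x => by
    rw [integral_sub (hg₁.const_mul _) (hg₀.const_mul _), integral_const_mul, integral_const_mul]
  simp_rw [hinner]
  rw [integral_sub (hf₀.mul_const _) (hf₁.mul_const _), integral_mul_const, integral_mul_const]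

theorem measure_pos_setOf_pos_of_integral_eq_zero {f : α → ℝ} (hf : Integrable f μ)
    (h0 : ∫ x, f x ∂μ = 0) (hne : ¬ f =ᵐ[μ] 0) : 0 < μ {x | 0 < f x} := by
  refine pos_iff_ne_zero.2 fun hnull => hne ?_
  have hnonpos : f ≤ᵐ[μ] 0 :=
    ae_iff.2 (measure_mono_null (fun x (hx : ¬f x ≤ 0) => not_le.1 hx) hnull)
  exact (integral_eq_iff_of_ae_le hf (integrable_zero _ _ _) hnonpos).1 (by simp [h0])

theorem measure_setOf_neg_pos_of_integral_eq_zero {f : α → ℝ} (hf : Integrable f μ)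
    (h0 : ∫ x, f x ∂μ = 0) (hne : ¬ f =ᵐ[μ] 0) : 0 < μ {x | f x < 0} := by
  simpa using measure_pos_setOf_pos_of_integral_eq_zero hf.neg (by simp [integral_neg, h0])
    fun h => hne (by simpa using h.neg)

theorem setIntegral_pos_of_subset {f : α → ℝ} {s u : Set α} (hs : NullMeasurableSet s μ)
    (hf : IntegrableOn f s μ) (hnn : ∀ x ∈ s, 0 ≤ f x) (hus : u ⊆ s)
    (hpos : ∀ x ∈ u, 0 < f x) (hu : 0 < μ u) : 0 < ∫ x in s, f x ∂μ := by
  have hnn_ae : 0 ≤ᵐ[μ.restrict s] f := by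
    filter_upwards [ae_restrict_mem₀ hs] with x hx using hnn x hx
  rw [setIntegral_pos_iff_support_of_nonneg_ae hnn_ae hf]
  exact hu.trans_le (measure_mono fun x hx => ⟨(hpos x hx).ne', hus hx⟩)

end General

section Chebyshev

variable {I : Set ℝ} {w₀ w₁ : ℝ → ℝ} {u v : ℝ}

-- the paper's `Ω(u, v)`
def chebyshevDet (w₀ w₁ : ℝ → ℝ) (u v : ℝ) : ℝ := w₀ u * w₁ v - w₀ v * w₁ u

theorem chebyshevDet_swap : chebyshevDet w₀ w₁ v u = -chebyshevDet w₀ w₁ u v := by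
  unfold chebyshevDet; ring

theorem chebyshevDet_pos_iff (hcheb : ∀ u ∈ I, ∀ v ∈ I, u < v → 0 < chebyshevDet w₀ w₁ u v)
    (hu : u ∈ I) (hv : v ∈ I) : 0 < chebyshevDet w₀ w₁ u v ↔ u < v := by
  refine ⟨fun h => ?_, hcheb u hu v hv⟩
  rcases lt_trichotomy u v with huv | rfl | hvu
  · exact huv
  · simp [chebyshevDet] at h
  · have := hcheb v hv u hu hvu
    rw [chebyshevDet_swap] at this
    linarith

theorem chebyshevDet_neg_iff (hcheb : ∀ u ∈ I, ∀ v ∈ I, u < v → 0 < chebyshevDet w₀ w₁ u v)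
    (hu : u ∈ I) (hv : v ∈ I) : chebyshevDet w₀ w₁ u v < 0 ↔ v < u := by
  rw [← chebyshevDet_pos_iff hcheb hv hu, chebyshevDet_swap, neg_lt_zero]

theorem mul_chebyshevDet_pos_iff
    (hcheb : ∀ u ∈ I, ∀ v ∈ I, u < v → 0 < chebyshevDet w₀ w₁ u v) (hu : u ∈ I) (hv : v ∈ I)
    {a : ℝ} (ha : 0 ≤ a) : 0 < a * chebyshevDet w₀ w₁ u v ↔ 0 < a ∧ u < v := by
  simp [mul_pos_iff, ha.not_gt, chebyshevDet_pos_iff hcheb hu hv]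

theorem mul_chebyshevDet_neg_iff
    (hcheb : ∀ u ∈ I, ∀ v ∈ I, u < v → 0 < chebyshevDet w₀ w₁ u v) (hu : u ∈ I) (hv : v ∈ I)
    {a : ℝ} (ha : 0 ≤ a) : a * chebyshevDet w₀ w₁ u v < 0 ↔ 0 < a ∧ v < u := by
  simp [mul_neg_iff, ha.not_gt, chebyshevDet_neg_iff hcheb hu hv]

theorem mul_chebyshevDet_eq (a : ℝ) :
    a * chebyshevDet w₀ w₁ u v = w₀ u * (a * w₁ v) - w₁ u * (a * w₀ v) := by
  unfold chebyshevDet; ring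

end Chebyshev

section Weighted

variable {T : Type*} [MeasurableSpace T] {μ : Measure T} {I : Set ℝ} {w₀ w₁ : ℝ → ℝ}
  {l m : T → ℝ} {c : ℝ}

-- `T'` and `T''` of the paper, for the weight `l = Λ(·, x, y)`, the means `m = M(·, x, y)` and
-- `c = M₀(x, y)`
def lowerPart (l m : T → ℝ) (c : ℝ) : Set T := {t | 0 < l t ∧ m t < c}

def upperPart (l m : T → ℝ) (c : ℝ) : Set T := {t | 0 < l t ∧ c ≤ m t}

theorem nullMeasurableSet_lowerPart (hl : AEMeasurable l μ) (hm : AEMeasurable m μ) :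
    NullMeasurableSet (lowerPart l m c) μ :=
  (nullMeasurableSet_lt aemeasurable_const hl).inter (nullMeasurableSet_lt hm aemeasurable_const)

theorem nullMeasurableSet_upperPart (hl : AEMeasurable l μ) (hm : AEMeasurable m μ) :
    NullMeasurableSet (upperPart l m c) μ :=
  (nullMeasurableSet_lt aemeasurable_const hl).inter (nullMeasurableSet_le aemeasurable_const hm)

theorem integral_integral_lowerPart_upperPart
    (h₀ : Integrable (fun t => l t * w₀ (m t)) μ) (h₁ : Integrable (fun t => l t * w₁ (m t)) μ) :
    ∫ t' in lowerPart l m c, ∫ t'' in upperPart l m c,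
        l t' * l t'' * chebyshevDet w₀ w₁ (m t') (m t'') ∂μ ∂μ =
      (∫ t in lowerPart l m c, l t * w₀ (m t) ∂μ) * (∫ t in upperPart l m c, l t * w₁ (m t) ∂μ) -
        (∫ t in lowerPart l m c, l t * w₁ (m t) ∂μ) *
          (∫ t in upperPart l m c, l t * w₀ (m t) ∂μ) := by
  rw [← integral_integral_mul_sub_mul h₀.restrict h₁.restrict h₀.restrict h₁.restrict]
  congr 1 with t'
  congr 1 with t''
  unfold chebyshevDet
  ring

theorem integrable_mul_chebyshevDet {ν : Measure T} (h₀ : Integrable (fun t => l t * w₀ (m t)) ν)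
    (h₁ : Integrable (fun t => l t * w₁ (m t)) ν) :
    Integrable (fun t => l t * chebyshevDet w₀ w₁ c (m t)) ν := by
  simp_rw [mul_chebyshevDet_eq]
  exact (h₁.const_mul _).sub (h₀.const_mul _)

theorem integral_mul_chebyshevDet {ν : Measure T} (h₀ : Integrable (fun t => l t * w₀ (m t)) ν)
    (h₁ : Integrable (fun t => l t * w₁ (m t)) ν) :
    ∫ t, l t * chebyshevDet w₀ w₁ c (m t) ∂ν =
      w₀ c * ∫ t, l t * w₁ (m t) ∂ν - w₁ c * ∫ t, l t * w₀ (m t) ∂ν := by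
  simp_rw [mul_chebyshevDet_eq]
  rw [integral_sub (h₁.const_mul _) (h₀.const_mul _), integral_const_mul, integral_const_mul]

theorem measure_lowerPart_pos_and_measure_gt_pos
    (hcheb : ∀ u ∈ I, ∀ v ∈ I, u < v → 0 < chebyshevDet w₀ w₁ u v)
    (hl : ∀ t, 0 ≤ l t) (hmI : ∀ t, m t ∈ I) (hcI : c ∈ I)
    (h₀ : Integrable (fun t => l t * w₀ (m t)) μ) (h₁ : Integrable (fun t => l t * w₁ (m t)) μ)
    (hrep₀ : w₀ c = ∫ t, l t * w₀ (m t) ∂μ) (hrep₁ : w₁ c = ∫ t, l t * w₁ (m t) ∂μ)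
    (hpos : 0 < μ {t | 0 < l t ∧ m t ≠ c}) :
    0 < μ (lowerPart l m c) ∧ 0 < μ {t | 0 < l t ∧ c < m t} := by
  set g : T → ℝ := fun t => l t * chebyshevDet w₀ w₁ c (m t)
  have hg : Integrable g μ := integrable_mul_chebyshevDet h₀ h₁
  have hg_pos_iff t : 0 < g t ↔ 0 < l t ∧ c < m t :=
    mul_chebyshevDet_pos_iff hcheb hcI (hmI t) (hl t)
  have hg_neg_iff t : g t < 0 ↔ 0 < l t ∧ m t < c :=
    mul_chebyshevDet_neg_iff hcheb hcI (hmI t) (hl t)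
  have hg_zero : ∫ t, g t ∂μ = 0 := by
    rw [integral_mul_chebyshevDet h₀ h₁, ← hrep₀, ← hrep₁]; ring
  have hg_ne : ¬ g =ᵐ[μ] 0 := fun h => hpos.ne' <| measure_mono_null (fun t ht => by
    rcases ht.2.lt_or_gt with hlt | hgt
    · exact ((hg_neg_iff t).2 ⟨ht.1, hlt⟩).ne
    · exact ((hg_pos_iff t).2 ⟨ht.1, hgt⟩).ne') h
  exact ⟨(measure_setOf_neg_pos_of_integral_eq_zero hg hg_zero hg_ne).trans_le
      (measure_mono fun t ht => (hg_neg_iff t).1 ht),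
    (measure_pos_setOf_pos_of_integral_eq_zero hg hg_zero hg_ne).trans_le
      (measure_mono fun t ht => (hg_pos_iff t).1 ht)⟩

theorem lowerPart_upperPart_det_pos (hw₀ : ∀ z ∈ I, 0 < w₀ z)
    (hcheb : ∀ u ∈ I, ∀ v ∈ I, u < v → 0 < chebyshevDet w₀ w₁ u v)
    (hl : ∀ t, 0 ≤ l t) (hl_meas : AEMeasurable l μ) (hm_meas : AEMeasurable m μ)
    (hmI : ∀ t, m t ∈ I) (hcI : c ∈ I)
    (h₀ : Integrable (fun t => l t * w₀ (m t)) μ) (h₁ : Integrable (fun t => l t * w₁ (m t)) μ)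
    (hrep₀ : w₀ c = ∫ t, l t * w₀ (m t) ∂μ) (hrep₁ : w₁ c = ∫ t, l t * w₁ (m t) ∂μ)
    (hpos : 0 < μ {t | 0 < l t ∧ m t ≠ c}) :
    0 < (∫ t in lowerPart l m c, l t * w₀ (m t) ∂μ) * (∫ t in upperPart l m c, l t * w₁ (m t) ∂μ) -
      (∫ t in lowerPart l m c, l t * w₁ (m t) ∂μ) * (∫ t in upperPart l m c, l t * w₀ (m t) ∂μ) := by
  obtain ⟨hlower, hupper⟩ :=
    measure_lowerPart_pos_and_measure_gt_pos hcheb hl hmI hcI h₀ h₁ hrep₀ hrep₁ hpos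
  have hdet_pos_iff t := mul_chebyshevDet_pos_iff hcheb hcI (hmI t) (hl t)
  have hdet_neg_iff t := mul_chebyshevDet_neg_iff hcheb hcI (hmI t) (hl t)
  have hw₀m t : 0 < w₀ (m t) := hw₀ _ (hmI t)
  set A := ∫ t in lowerPart l m c, l t * w₀ (m t) ∂μ
  set B := ∫ t in lowerPart l m c, l t * w₁ (m t) ∂μ
  set C := ∫ t in upperPart l m c, l t * w₀ (m t) ∂μ
  set D := ∫ t in upperPart l m c, l t * w₁ (m t) ∂μ
  have hA : 0 < A :=
    setIntegral_pos_of_subset (nullMeasurableSet_lowerPart hl_meas hm_meas) h₀.integrableOn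
      (fun t _ => mul_nonneg (hl t) (hw₀m t).le) subset_rfl (fun t ht => mul_pos ht.1 (hw₀m t))
      hlower
  have hC : 0 ≤ C := integral_nonneg fun t => mul_nonneg (hl t) (hw₀m t).le
  have hlower_int : w₀ c * B - w₁ c * A ≤ 0 := by
    rw [← integral_mul_chebyshevDet h₀.restrict h₁.restrict]
    refine setIntegral_nonpos_of_ae_restrict ?_
    filter_upwards [ae_restrict_mem₀ (nullMeasurableSet_lowerPart hl_meas hm_meas)] with t ht
    exact ((hdet_neg_iff t).2 ht).le
  have hupper_int : 0 < w₀ c * D - w₁ c * C := by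
    rw [← integral_mul_chebyshevDet h₀.restrict h₁.restrict]
    exact setIntegral_pos_of_subset (nullMeasurableSet_upperPart hl_meas hm_meas)
      (integrable_mul_chebyshevDet h₀ h₁).integrableOn
      (fun t ht => not_lt.1 fun h => ((hdet_neg_iff t).1 h).2.not_ge ht.2)
      (fun t ht => ⟨ht.1, ht.2.le⟩) (fun t ht => (hdet_pos_iff t).2 ht) hupper
  have key : w₀ c * (A * D - B * C) =
      A * (w₀ c * D - w₁ c * C) - C * (w₀ c * B - w₁ c * A) := by ring
  refine (mul_pos_iff_of_pos_left (hw₀ c hcI)).1 ?_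
  rw [key]
  linarith [mul_pos hA hupper_int, mul_nonpos_of_nonneg_of_nonpos hC hlower_int]

end Weighted

theorem double_integral_positive_general
    (a b : ℝ)
    (ω₀ ω₁ : ℝ → ℝ)
    (hω₀pos : ∀ z ∈ Set.Ioo a b, 0 < ω₀ z)
    (hcheb : ∀ u ∈ Set.Ioo a b, ∀ v ∈ Set.Ioo a b, u < v →
        0 < ω₀ u * ω₁ v - ω₀ v * ω₁ u)
    {T : Type*} [MeasurableSpace T] (μ : Measure T)
    (Λ M : T → ℝ → ℝ → ℝ) (M₀ : ℝ → ℝ → ℝ)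
    (hΛnn : ∀ t x y, 0 ≤ Λ t x y)
    (hΛint : ∀ x ∈ Set.Ioo a b, ∀ y ∈ Set.Ioo a b, x < y →
        Integrable (fun t => Λ t x y) μ)
    (hMmeas : ∀ x y, Measurable (fun t => M t x y))
    (hMmean : ∀ t, ∀ x ∈ Set.Ioo a b, ∀ y ∈ Set.Ioo a b, x < y →
        M t x y ∈ Set.Icc x y)
    (hM₀strict : ∀ x ∈ Set.Ioo a b, ∀ y ∈ Set.Ioo a b, x < y →
        M₀ x y ∈ Set.Ioo x y)
    (hposmeas : ∀ x ∈ Set.Ioo a b, ∀ y ∈ Set.Ioo a b, x < y →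
        0 < μ {t | 0 < Λ t x y ∧ M t x y ≠ M₀ x y})
    (hint₀ : ∀ x ∈ Set.Ioo a b, ∀ y ∈ Set.Ioo a b, x < y →
        Integrable (fun t => Λ t x y * ω₀ (M t x y)) μ)
    (hint₁ : ∀ x ∈ Set.Ioo a b, ∀ y ∈ Set.Ioo a b, x < y →
        Integrable (fun t => Λ t x y * ω₁ (M t x y)) μ)
    (hrep₀ : ∀ x ∈ Set.Ioo a b, ∀ y ∈ Set.Ioo a b, x < y →
        ω₀ (M₀ x y) = ∫ t, Λ t x y * ω₀ (M t x y) ∂μ)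
    (hrep₁ : ∀ x ∈ Set.Ioo a b, ∀ y ∈ Set.Ioo a b, x < y →
        ω₁ (M₀ x y) = ∫ t, Λ t x y * ω₁ (M t x y) ∂μ) :
    ∀ x ∈ Set.Ioo a b, ∀ y ∈ Set.Ioo a b, x < y →
      (∫ t' in {t | 0 < Λ t x y ∧ M t x y < M₀ x y},
          ∫ t'' in {t | 0 < Λ t x y ∧ M₀ x y ≤ M t x y},
            Λ t' x y * Λ t'' x y *
              (ω₀ (M t' x y) * ω₁ (M t'' x y) - ω₀ (M t'' x y) * ω₁ (M t' x y)) ∂μ ∂μ) =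
        (∫ t in {t | 0 < Λ t x y ∧ M t x y < M₀ x y}, Λ t x y * ω₀ (M t x y) ∂μ) *
          (∫ t in {t | 0 < Λ t x y ∧ M₀ x y ≤ M t x y}, Λ t x y * ω₁ (M t x y) ∂μ) -
        (∫ t in {t | 0 < Λ t x y ∧ M t x y < M₀ x y}, Λ t x y * ω₁ (M t x y) ∂μ) *
          (∫ t in {t | 0 < Λ t x y ∧ M₀ x y ≤ M t x y}, Λ t x y * ω₀ (M t x y) ∂μ) ∧
      0 < (∫ t' in {t | 0 < Λ t x y ∧ M t x y < M₀ x y},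
          ∫ t'' in {t | 0 < Λ t x y ∧ M₀ x y ≤ M t x y},
            Λ t' x y * Λ t'' x y *
              (ω₀ (M t' x y) * ω₁ (M t'' x y) - ω₀ (M t'' x y) * ω₁ (M t' x y)) ∂μ ∂μ) := by
  intro x hx y hy hxy
  have hMI t : M t x y ∈ Set.Ioo a b := Set.Icc_subset_Ioo hx.1 hy.2 (hMmean t x hx y hy hxy)
  have hM₀I : M₀ x y ∈ Set.Ioo a b :=
    Set.Ioo_subset_Ioo hx.1.le hy.2.le (hM₀strict x hx y hy hxy)
  have hdouble := integral_integral_lowerPart_upperPart (c := M₀ x y) (hint₀ x hx y hy hxy)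
    (hint₁ x hx y hy hxy)
  refine ⟨hdouble, hdouble ▸ ?_⟩
  exact lowerPart_upperPart_det_pos hω₀pos hcheb (fun t => hΛnn t x y)
    (hΛint x hx y hy hxy).aemeasurable (hMmeas x y).aemeasurable hMI hM₀I
    (hint₀ x hx y hy hxy) (hint₁ x hx y hy hxy) (hrep₀ x hx y hy hxy) (hrep₁ x hx y hy hxy)
    (hposmeas x hx y hy hxy)

/-- under (A1)–(A4), the double integral
`∬_{T'×T''} Λ(t')Λ(t'')Ω(M(t'),M(t'')) dμ dμ` equals
`S₀'S₁'' − S₁'S₀''`, and this quantity is strictly positive. -/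
theorem double_integral_positive
    (a b : ℝ) (hab : a < b)
    (ω₀ ω₁ : ℝ → ℝ)
    (hc₀ : ContinuousOn ω₀ (Set.Ioo a b)) (hc₁ : ContinuousOn ω₁ (Set.Ioo a b))
    (hω₀pos : ∀ z ∈ Set.Ioo a b, 0 < ω₀ z)
    (hcheb : ∀ u ∈ Set.Ioo a b, ∀ v ∈ Set.Ioo a b, u < v →
        0 < ω₀ u * ω₁ v - ω₀ v * ω₁ u)
    {T : Type*} [MeasurableSpace T] (μ : Measure T)
    (Λ M : T → ℝ → ℝ → ℝ) (M₀ : ℝ → ℝ → ℝ)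
    (hΛnn : ∀ t x y, 0 ≤ Λ t x y)
    (hΛint : ∀ x ∈ Set.Ioo a b, ∀ y ∈ Set.Ioo a b, x < y →
        Integrable (fun t => Λ t x y) μ)
    (hMmeas : ∀ x y, Measurable (fun t => M t x y))
    (hMmean : ∀ t, ∀ x ∈ Set.Ioo a b, ∀ y ∈ Set.Ioo a b, x < y →
        M t x y ∈ Set.Icc x y)
    (hM₀strict : ∀ x ∈ Set.Ioo a b, ∀ y ∈ Set.Ioo a b, x < y →
        M₀ x y ∈ Set.Ioo x y)
    (hposmeas : ∀ x ∈ Set.Ioo a b, ∀ y ∈ Set.Ioo a b, x < y →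
        0 < μ {t | 0 < Λ t x y ∧ M t x y ≠ M₀ x y})
    (hint₀ : ∀ x ∈ Set.Ioo a b, ∀ y ∈ Set.Ioo a b, x < y →
        Integrable (fun t => Λ t x y * ω₀ (M t x y)) μ)
    (hint₁ : ∀ x ∈ Set.Ioo a b, ∀ y ∈ Set.Ioo a b, x < y →
        Integrable (fun t => Λ t x y * ω₁ (M t x y)) μ)
    (hrep₀ : ∀ x ∈ Set.Ioo a b, ∀ y ∈ Set.Ioo a b, x < y →
        ω₀ (M₀ x y) = ∫ t, Λ t x y * ω₀ (M t x y) ∂μ)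
    (hrep₁ : ∀ x ∈ Set.Ioo a b, ∀ y ∈ Set.Ioo a b, x < y →
        ω₁ (M₀ x y) = ∫ t, Λ t x y * ω₁ (M t x y) ∂μ) :
    ∀ x ∈ Set.Ioo a b, ∀ y ∈ Set.Ioo a b, x < y →
      (∫ t' in {t | 0 < Λ t x y ∧ M t x y < M₀ x y},
          ∫ t'' in {t | 0 < Λ t x y ∧ M₀ x y ≤ M t x y},
            Λ t' x y * Λ t'' x y *
              (ω₀ (M t' x y) * ω₁ (M t'' x y) - ω₀ (M t'' x y) * ω₁ (M t' x y)) ∂μ ∂μ) =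
        (∫ t in {t | 0 < Λ t x y ∧ M t x y < M₀ x y}, Λ t x y * ω₀ (M t x y) ∂μ) *
          (∫ t in {t | 0 < Λ t x y ∧ M₀ x y ≤ M t x y}, Λ t x y * ω₁ (M t x y) ∂μ) -
        (∫ t in {t | 0 < Λ t x y ∧ M t x y < M₀ x y}, Λ t x y * ω₁ (M t x y) ∂μ) *
          (∫ t in {t | 0 < Λ t x y ∧ M₀ x y ≤ M t x y}, Λ t x y * ω₀ (M t x y) ∂μ) ∧
      0 < (∫ t' in {t | 0 < Λ t x y ∧ M t x y < M₀ x y},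
          ∫ t'' in {t | 0 < Λ t x y ∧ M₀ x y ≤ M t x y},
            Λ t' x y * Λ t'' x y *
              (ω₀ (M t' x y) * ω₁ (M t'' x y) - ω₀ (M t'' x y) * ω₁ (M t' x y)) ∂μ ∂μ) :=
  double_integral_positive_general a b ω₀ ω₁ hω₀pos hcheb μ Λ M M₀ hΛnn hΛint hMmeas hMmean
    hM₀strict hposmeas hint₀ hint₁ hrep₀ hrep₁
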